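/- For 0 ≤ k ≤ n, the squared Euclidean norm of E^{k,n} Π(L^k) equals 1/((2k+1) λ^n_k), where λ^n_k = (n!)^2/((n+k+1)!(n-k)!). -/

import Mathlib

open Finset Nat

/-- Symmetric trinomial identity. -/
lemma trinom_symm (N p q : ℕ) :
    N.choose p * (N - p).choose q = N.choose q * (N - q).choose p := by
  by_cases h : p + q ≤ N
  · have h1 := Nat.choose_mul (n := N) (Nat.le_add_right p q)
    have h2 := Nat.choose_mul (n := N) (Nat.le_add_left q p)
    rw [Nat.add_sub_cancel_left] at h1
    rw [Nat.add_sub_cancel] at h2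
    rw [← h1, ← h2, Nat.choose_symm_add]
  · push_neg at h
    have e1 : N.choose p * (N - p).choose q = 0 := by
      by_cases hp : p ≤ N
      · rw [Nat.choose_eq_zero_of_lt (show N - p < q by omega), Nat.mul_zero]
      · rw [Nat.choose_eq_zero_of_lt (by omega), Nat.zero_mul]
    have e2 : N.choose q * (N - q).choose p = 0 := by
      by_cases hq : q ≤ N
      · rw [Nat.choose_eq_zero_of_lt (show N - q < p by omega), Nat.mul_zero]
      · rw [Nat.choose_eq_zero_of_lt (by omega), Nat.zero_mul]
    rw [e1, e2]

/-- Vandermonde with padded range. -/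
lemma vand2 (x s K : ℕ) (h : s ≤ K) :
    (x + s).choose s = ∑ c ∈ range (K + 1), x.choose c * s.choose c := by
  calc (x + s).choose s
      = ∑ c ∈ range (s + 1), x.choose c * s.choose (s - c) := by
        rw [Nat.add_choose_eq, Finset.Nat.sum_antidiagonal_eq_sum_range_succ_mk]
    _ = ∑ c ∈ range (s + 1), x.choose c * s.choose c := by
        refine Finset.sum_congr rfl fun c hc => ?_
        rw [Finset.mem_range] at hc
        rw [Nat.choose_symm (by omega)]
    _ = ∑ c ∈ range (K + 1), x.choose c * s.choose c := by
        refine Finset.sum_subset (Finset.range_subset_range.2 (by omega)) fun c _ hc => ?_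
        rw [Finset.mem_range] at hc
        rw [Nat.choose_eq_zero_of_lt (show s < c by omega), Nat.mul_zero]

/-- Alternating sum of binomial coefficients, real version, padded range. -/
lemma alt_choose_real (M K : ℕ) (h : M ≤ K) :
    ∑ m ∈ range (K + 1), (-1 : ℝ) ^ m * (M.choose m : ℝ) =
      if M = 0 then 1 else 0 := by
  have e : ∑ m ∈ range (M + 1), (-1 : ℝ) ^ m * (M.choose m : ℝ)
      = ∑ m ∈ range (K + 1), (-1 : ℝ) ^ m * (M.choose m : ℝ) := by
    refine Finset.sum_subset (Finset.range_subset_range.2 (by omega)) fun c _ hc => ?_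
    rw [Finset.mem_range] at hc
    rw [Nat.choose_eq_zero_of_lt (by omega), Nat.cast_zero, mul_zero]
  rw [← e]
  have h2 : ∑ m ∈ range (M + 1), (-1 : ℝ) ^ m * (M.choose m : ℝ)
      = ((∑ i ∈ range (M + 1), (-1 : ℤ) ^ i * (M.choose i : ℤ) : ℤ) : ℝ) := by
    push_cast; rfl
  rw [h2, Int.alternating_sum_range_choose]
  split_ifs <;> simp

/-- Double hockey-stick / Vandermonde-type sum. -/
lemma hockey2 (a : ℕ) : ∀ N b : ℕ,
    ∑ m ∈ range (N + 1), (a + m).choose m * (b + (N - m)).choose (N - m)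
      = (a + b + N + 1).choose N := by
  intro N
  induction N with
  | zero => simp
  | succ N ihN =>
    intro b
    induction b with
    | zero =>
      rw [Finset.sum_range_succ]
      have e1 : ∀ m ∈ range (N + 1),
          (a + m).choose m * ((0:ℕ) + (N + 1 - m)).choose (N + 1 - m)
          = (a + m).choose m * ((0:ℕ) + (N - m)).choose (N - m) := by
        intro m hm
        simp [Nat.choose_self]
      rw [Finset.sum_congr rfl e1, ihN 0]
      have e2 : a + 0 + (N + 1) + 1 = (a + 0 + N + 1) + 1 := by omega
      rw [e2, Nat.choose_succ_succ']
      have e3 : a + (N + 1) = a + 0 + N + 1 := by omega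
      rw [Nat.sub_self, e3]
      simp
    | succ b ihb =>
      have hB : (∑ m ∈ range (N + 1), (a + m).choose m * (b + (N + 1 - m)).choose (N + 1 - m))
          + (a + (N + 1)).choose (N + 1) = (a + b + N + 2).choose (N + 1) := by
        have h := ihb
        rw [Finset.sum_range_succ] at h
        simp only [Nat.sub_self, Nat.add_zero, Nat.choose_zero_right, Nat.mul_one] at h
        rw [show a + b + (N + 1) + 1 = a + b + N + 2 from by omega] at h
        exact h
      have hA : ∑ m ∈ range (N + 1), (a + m).choose m * ((b + 1) + (N - m)).choose (N - m)
          = (a + b + N + 2).choose N := by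
        rw [ihN (b + 1)]
        congr 1
        omega
      have hP : (a + (b + 1) + (N + 1) + 1).choose (N + 1)
          = (a + b + N + 2).choose N + (a + b + N + 2).choose (N + 1) := by
        rw [show a + (b + 1) + (N + 1) + 1 = (a + b + N + 2) + 1 from by omega,
          Nat.choose_succ_succ']
      rw [Finset.sum_range_succ]
      have e1 : ∀ m ∈ range (N + 1),
          (a + m).choose m * ((b + 1) + (N + 1 - m)).choose (N + 1 - m)
          = (a + m).choose m * ((b + 1) + (N - m)).choose (N - m)
            + (a + m).choose m * (b + (N + 1 - m)).choose (N + 1 - m) := by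
        intro m hm
        rw [Finset.mem_range] at hm
        have h1 : N + 1 - m = (N - m) + 1 := by omega
        have h2 : b + 1 + ((N - m) + 1) = (b + 1 + (N - m)) + 1 := by omega
        have h3 : b + ((N - m) + 1) = b + 1 + (N - m) := by omega
        rw [h1, h2, Nat.choose_succ_succ', h3, Nat.mul_add]
      rw [Finset.sum_congr rfl e1, Finset.sum_add_distrib, hA]
      simp only [Nat.sub_self, Nat.add_zero, Nat.choose_zero_right, Nat.mul_one]
      omega
/-- Inner alternating sum collapse. -/
lemma inner_alt (k c a : ℕ) :
    ∑ j ∈ range (k + 1),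
        (-1 : ℝ) ^ j * (k.choose j : ℝ) * (j.choose c : ℝ) * ((k - j).choose a : ℝ)
      = if a + c = k then (-1 : ℝ) ^ c * (k.choose c : ℝ) else 0 := by
  by_cases hc : c ≤ k
  · have hsplit : ∑ j ∈ range (k + 1),
        (-1 : ℝ) ^ j * (k.choose j : ℝ) * (j.choose c : ℝ) * ((k - j).choose a : ℝ)
        = ∑ j ∈ Finset.Ico 0 c,
            (-1 : ℝ) ^ j * (k.choose j : ℝ) * (j.choose c : ℝ) * ((k - j).choose a : ℝ)
          + ∑ j ∈ Finset.Ico c (k + 1),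
            (-1 : ℝ) ^ j * (k.choose j : ℝ) * (j.choose c : ℝ) * ((k - j).choose a : ℝ) := by
      rw [Finset.range_eq_Ico, ← Finset.sum_Ico_consecutive _ (Nat.zero_le c) (by omega : c ≤ k + 1)]
    rw [hsplit]
    have hz : ∑ j ∈ Finset.Ico 0 c,
        (-1 : ℝ) ^ j * (k.choose j : ℝ) * (j.choose c : ℝ) * ((k - j).choose a : ℝ) = 0 := by
      refine Finset.sum_eq_zero fun j hj => ?_
      rw [Finset.mem_Ico] at hj
      rw [Nat.choose_eq_zero_of_lt hj.2]
      simp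
    rw [hz, zero_add, Finset.sum_Ico_eq_sum_range]
    rw [show k + 1 - c = (k - c) + 1 from by omega]
    have e1 : ∀ m ∈ range ((k - c) + 1),
        (-1 : ℝ) ^ (c + m) * (k.choose (c + m) : ℝ) * ((c + m).choose c : ℝ)
            * ((k - (c + m)).choose a : ℝ)
        = ((-1 : ℝ) ^ c * (k.choose c : ℝ) * ((k - c).choose a : ℝ))
            * ((-1 : ℝ) ^ m * (((k - c) - a).choose m : ℝ)) := by
      intro m hm
      rw [Finset.mem_range] at hm
      have n1 : k.choose (c + m) * (c + m).choose c = k.choose c * (k - c).choose m := by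
        have := Nat.choose_mul (n := k) (Nat.le_add_right c m)
        rwa [Nat.add_sub_cancel_left] at this
      have n2 : (k - (c + m)).choose a = ((k - c) - m).choose a := by
        rw [Nat.sub_add_eq]
      have n3 : (k - c).choose m * ((k - c) - m).choose a
          = (k - c).choose a * ((k - c) - a).choose m := trinom_symm (k - c) m a
      have nn : k.choose (c + m) * (c + m).choose c * (k - (c + m)).choose a
          = k.choose c * ((k - c).choose a * ((k - c) - a).choose m) := by
        rw [n2, n1, Nat.mul_assoc, n3]
      have nr : (k.choose (c + m) : ℝ) * ((c + m).choose c : ℝ) * ((k - (c + m)).choose a : ℝ)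
          = (k.choose c : ℝ) * (((k - c).choose a : ℝ) * (((k - c) - a).choose m : ℝ)) := by
        exact_mod_cast congrArg (Nat.cast : ℕ → ℝ) nn
      rw [pow_add]
      calc (-1 : ℝ) ^ c * (-1 : ℝ) ^ m * (k.choose (c + m) : ℝ) * ((c + m).choose c : ℝ)
            * ((k - (c + m)).choose a : ℝ)
          = (-1 : ℝ) ^ c * (-1 : ℝ) ^ m *
              ((k.choose (c + m) : ℝ) * ((c + m).choose c : ℝ) * ((k - (c + m)).choose a : ℝ)) := by
            ring
        _ = (-1 : ℝ) ^ c * (-1 : ℝ) ^ m *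
              ((k.choose c : ℝ) * (((k - c).choose a : ℝ) * (((k - c) - a).choose m : ℝ))) := by
            rw [nr]
        _ = ((-1 : ℝ) ^ c * (k.choose c : ℝ) * ((k - c).choose a : ℝ))
            * ((-1 : ℝ) ^ m * (((k - c) - a).choose m : ℝ)) := by ring
    rw [Finset.sum_congr rfl e1, ← Finset.mul_sum,
      alt_choose_real ((k - c) - a) (k - c) (Nat.sub_le _ _)]
    by_cases hak : a + c = k
    · rw [if_pos hak, if_pos (show (k - c) - a = 0 from by omega),
        show a = k - c from by omega, Nat.choose_self]
      simp
    · rw [if_neg hak]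
      by_cases h0 : (k - c) - a = 0
      · rw [if_pos h0, Nat.choose_eq_zero_of_lt (show k - c < a from by omega)]
        simp
      · rw [if_neg h0]
        simp
  · rw [if_neg (by omega)]
    refine Finset.sum_eq_zero fun j hj => ?_
    rw [Finset.mem_range] at hj
    rw [Nat.choose_eq_zero_of_lt (show j < c from by omega)]
    simp

/-- The key self-duality identity. -/
lemma key (k x y : ℕ) :
    ∑ j ∈ range (k + 1), (-1 : ℝ) ^ j * (k.choose j : ℝ) * ((x + j).choose j : ℝ)
        * ((y + (k - j)).choose (k - j) : ℝ)
      = ∑ j ∈ range (k + 1), (-1 : ℝ) ^ j * (k.choose j : ℝ) * (x.choose j : ℝ)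
        * (y.choose (k - j) : ℝ) := by
  have e1 : ∀ j ∈ range (k + 1),
      (-1 : ℝ) ^ j * (k.choose j : ℝ) * ((x + j).choose j : ℝ)
          * ((y + (k - j)).choose (k - j) : ℝ)
      = ∑ c ∈ range (k + 1), ∑ a ∈ range (k + 1),
          (x.choose c : ℝ) * (y.choose a : ℝ)
            * ((-1 : ℝ) ^ j * (k.choose j : ℝ) * (j.choose c : ℝ) * ((k - j).choose a : ℝ)) := by
    intro j hj
    rw [Finset.mem_range] at hj
    have v1 : ((x + j).choose j : ℝ) = ∑ c ∈ range (k + 1), (x.choose c : ℝ) * (j.choose c : ℝ) := by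
      exact_mod_cast congrArg (Nat.cast : ℕ → ℝ) (vand2 x j k (by omega))
    have v2 : ((y + (k - j)).choose (k - j) : ℝ)
        = ∑ a ∈ range (k + 1), (y.choose a : ℝ) * ((k - j).choose a : ℝ) := by
      exact_mod_cast congrArg (Nat.cast : ℕ → ℝ) (vand2 y (k - j) k (Nat.sub_le _ _))
    rw [v1, v2, mul_assoc, Finset.sum_mul_sum, Finset.mul_sum]
    refine Finset.sum_congr rfl fun c _ => ?_
    rw [Finset.mul_sum]
    refine Finset.sum_congr rfl fun a _ => ?_
    ring
  rw [Finset.sum_congr rfl e1, Finset.sum_comm]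
  have e2 : ∀ c ∈ range (k + 1),
      ∑ j ∈ range (k + 1), ∑ a ∈ range (k + 1),
          (x.choose c : ℝ) * (y.choose a : ℝ)
            * ((-1 : ℝ) ^ j * (k.choose j : ℝ) * (j.choose c : ℝ) * ((k - j).choose a : ℝ))
      = (-1 : ℝ) ^ c * (k.choose c : ℝ) * (x.choose c : ℝ) * (y.choose (k - c) : ℝ) := by
    intro c hc
    rw [Finset.mem_range] at hc
    rw [Finset.sum_comm]
    have e3 : ∀ a ∈ range (k + 1),
        ∑ j ∈ range (k + 1),
            (x.choose c : ℝ) * (y.choose a : ℝ)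
              * ((-1 : ℝ) ^ j * (k.choose j : ℝ) * (j.choose c : ℝ) * ((k - j).choose a : ℝ))
        = (x.choose c : ℝ) * (y.choose a : ℝ)
            * (if a + c = k then (-1 : ℝ) ^ c * (k.choose c : ℝ) else 0) := by
      intro a _
      rw [← Finset.mul_sum, inner_alt]
    rw [Finset.sum_congr rfl e3]
    rw [Finset.sum_eq_single (k - c)]
    · rw [if_pos (by omega)]
      ring
    · intro b hb hbne
      rw [Finset.mem_range] at hb
      rw [if_neg (by omega)]
      rw [mul_zero]
    · intro hnk
      exact absurd (Finset.mem_range.2 (by omega)) hnk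
  rw [Finset.sum_congr rfl e2]
noncomputable def betaI (a b : ℕ) : ℝ := (a ! : ℝ) * (b ! : ℝ) / ((a + b + 1)! : ℝ)

lemma fact_ne (m : ℕ) : ((m ! : ℝ)) ≠ 0 := by
  exact_mod_cast (Nat.factorial_pos m).ne'

lemma choose_ne {m l : ℕ} (h : l ≤ m) : ((m.choose l : ℝ)) ≠ 0 := by
  exact_mod_cast (Nat.choose_pos h).ne'

lemma elevbeta (a b N : ℕ) :
    ∑ m ∈ range (N + 1), (N.choose m : ℝ) * betaI (a + m) (b + (N - m)) = betaI a b := by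
  have e1 : ∀ m ∈ range (N + 1), (N.choose m : ℝ) * betaI (a + m) (b + (N - m))
      = ((a + m).choose m : ℝ) * ((b + (N - m)).choose (N - m) : ℝ)
          * ((a ! : ℝ) * (b ! : ℝ) * (N ! : ℝ) / ((a + b + N + 1)! : ℝ)) := by
    intro m hm
    rw [Finset.mem_range] at hm
    unfold betaI
    rw [show (a + m) + (b + (N - m)) + 1 = a + b + N + 1 from by omega]
    have nn : N.choose m * ((a + m)! * (b + (N - m))!)
        = (a + m).choose m * (b + (N - m)).choose (N - m) * (a ! * b ! * N !) := by
      have h1 : (a + m).choose m * a ! * m ! = (a + m)! :=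
        Nat.add_choose_mul_factorial_mul_factorial a m
      have h2 : (b + (N - m)).choose (N - m) * b ! * (N - m)! = (b + (N - m))! :=
        Nat.add_choose_mul_factorial_mul_factorial b (N - m)
      have h3 : N.choose m * m ! * (N - m)! = N ! :=
        Nat.choose_mul_factorial_mul_factorial (by omega)
      calc N.choose m * ((a + m)! * (b + (N - m))!)
          = N.choose m * (((a + m).choose m * a ! * m !)
              * ((b + (N - m)).choose (N - m) * b ! * (N - m)!)) := by rw [h1, h2]
        _ = (a + m).choose m * (b + (N - m)).choose (N - m)
              * (a ! * b ! * (N.choose m * m ! * (N - m)!)) := by ring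
        _ = _ := by rw [h3]
    have nr : (N.choose m : ℝ) * (((a + m)! : ℝ) * ((b + (N - m))! : ℝ))
        = ((a + m).choose m : ℝ) * ((b + (N - m)).choose (N - m) : ℝ)
          * ((a ! : ℝ) * (b ! : ℝ) * (N ! : ℝ)) := by exact_mod_cast nn
    rw [mul_div_assoc', mul_div_assoc']
    rw [← mul_assoc]
    congr 1
    rw [mul_assoc] at nr ⊢
    rw [nr]
    ring
  rw [Finset.sum_congr rfl e1, ← Finset.sum_mul]
  have h4 : ∑ m ∈ range (N + 1), ((a + m).choose m : ℝ) * ((b + (N - m)).choose (N - m) : ℝ)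
      = ((a + b + N + 1).choose N : ℝ) := by
    exact_mod_cast congrArg (fun t : ℕ => (t : ℝ)) (hockey2 a N b)
  rw [h4]
  unfold betaI
  have nn2 : (a + b + N + 1).choose N * (a ! * b ! * N !) * (a + b + 1)!
      = a ! * b ! * (a + b + N + 1)! := by
    have h5 : (a + b + N + 1).choose N * N ! * (a + b + 1)! = (a + b + N + 1)! := by
      have := Nat.choose_mul_factorial_mul_factorial
        (show N ≤ a + b + N + 1 from by omega)
      rwa [show a + b + N + 1 - N = a + b + 1 from by omega] at this
    calc (a + b + N + 1).choose N * (a ! * b ! * N !) * (a + b + 1)!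
        = a ! * b ! * ((a + b + N + 1).choose N * N ! * (a + b + 1)!) := by ring
      _ = _ := by rw [h5]
  have nr2 : ((a + b + N + 1).choose N : ℝ) * ((a ! : ℝ) * (b ! : ℝ) * (N ! : ℝ))
      * ((a + b + 1)! : ℝ) = (a ! : ℝ) * (b ! : ℝ) * ((a + b + N + 1)! : ℝ) := by
    exact_mod_cast nn2
  field_simp
  have hab : (a ! : ℝ) * (b ! : ℝ) ≠ 0 := mul_ne_zero (fact_ne a) (fact_ne b)
  apply mul_left_cancel₀ hab
  linear_combination nr2

lemma multi (n k i j : ℕ) (hk : k ≤ n) (hi : i ≤ n) (hj : j ≤ k) (hji : j ≤ i) :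
    n.choose i * (i.choose j * (n - i).choose (k - j))
      = n.choose k * (k.choose j * (n - k).choose (i - j)) := by
  have h1 : n.choose i * i.choose j = n.choose j * (n - j).choose (i - j) :=
    Nat.choose_mul hji
  have h2 : n.choose k * k.choose j = n.choose j * (n - j).choose (k - j) :=
    Nat.choose_mul hj
  have h3 : (n - j).choose (i - j) * ((n - j) - (i - j)).choose (k - j)
      = (n - j).choose (k - j) * ((n - j) - (k - j)).choose (i - j) := trinom_symm _ _ _
  rw [show (n - j) - (i - j) = n - i from by omega,
    show (n - j) - (k - j) = n - k from by omega] at h3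
  calc n.choose i * (i.choose j * (n - i).choose (k - j))
      = (n.choose i * i.choose j) * (n - i).choose (k - j) := by ring
    _ = n.choose j * ((n - j).choose (i - j) * (n - i).choose (k - j)) := by rw [h1]; ring
    _ = n.choose j * ((n - j).choose (k - j) * (n - k).choose (i - j)) := by rw [h3]
    _ = (n.choose k * k.choose j) * (n - k).choose (i - j) := by rw [h2]; ring
    _ = _ := by ring
noncomputable def lamval (n k : ℕ) : ℝ :=
  ((n ! : ℝ)) ^ 2 / (((n + k + 1)! : ℝ) * (((n - k)! : ℝ)))

noncomputable def wv (n k i : ℕ) : ℝ :=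
  ∑ j ∈ range (k + 1),
    (if j ≤ i then (k.choose j : ℝ) * ((n - k).choose (i - j) : ℝ) else 0)
      * ((-1 : ℝ) ^ (k + j) * (k.choose j : ℝ))

lemma eigen (n k i : ℕ) (hk : k ≤ n) (hi : i ≤ n) :
    ∑ j ∈ range (k + 1), ((-1 : ℝ) ^ (k + j) * (k.choose j : ℝ))
        * ((k.choose j : ℝ) * (n.choose i : ℝ) * betaI (i + j) ((n - i) + (k - j)))
      = lamval n k * (wv n k i / (n.choose i : ℝ)) := by
  set K : ℝ := (n.choose i : ℝ) * (i ! : ℝ) * ((n - i)! : ℝ) * (k ! : ℝ)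
      / ((n + k + 1)! : ℝ) * (-1 : ℝ) ^ k with hK
  have stepA : ∀ j ∈ range (k + 1),
      ((-1 : ℝ) ^ (k + j) * (k.choose j : ℝ))
        * ((k.choose j : ℝ) * (n.choose i : ℝ) * betaI (i + j) ((n - i) + (k - j)))
      = K * ((-1 : ℝ) ^ j * (k.choose j : ℝ) * ((i + j).choose j : ℝ)
          * (((n - i) + (k - j)).choose (k - j) : ℝ)) := by
    intro j hj
    rw [Finset.mem_range] at hj
    unfold betaI
    rw [show (i + j) + ((n - i) + (k - j)) + 1 = n + k + 1 from by omega]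
    have f1 : ((i + j)! : ℝ) = ((i + j).choose j : ℝ) * (i ! : ℝ) * (j ! : ℝ) := by
      exact_mod_cast (Nat.add_choose_mul_factorial_mul_factorial i j).symm
    have f2 : (((n - i) + (k - j))! : ℝ)
        = (((n - i) + (k - j)).choose (k - j) : ℝ) * (((n - i))! : ℝ) * (((k - j))! : ℝ) := by
      exact_mod_cast (Nat.add_choose_mul_factorial_mul_factorial (n - i) (k - j)).symm
    have f3 : (k.choose j : ℝ) * (j ! : ℝ) * ((k - j)! : ℝ) = (k ! : ℝ) := by
      exact_mod_cast Nat.choose_mul_factorial_mul_factorial (show j ≤ k from by omega)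
    rw [hK, f1, f2, pow_add, ← f3]
    ring
  rw [Finset.sum_congr rfl stepA, ← Finset.mul_sum, key k i (n - i), Finset.mul_sum]
  unfold wv
  rw [Finset.sum_div, Finset.mul_sum]
  refine Finset.sum_congr rfl fun j hj => ?_
  rw [Finset.mem_range] at hj
  by_cases hji : j ≤ i
  · rw [if_pos hji]
    have natid : n.choose i * n.choose i * i ! * (n - i)! * k ! * (n - k)!
          * (i.choose j * (n - i).choose (k - j))
        = n ! * n ! * (k.choose j * (n - k).choose (i - j)) := by
      have h5 : n.choose i * i ! * (n - i)! = n ! :=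
        Nat.choose_mul_factorial_mul_factorial hi
      have h6 : n.choose k * k ! * (n - k)! = n ! :=
        Nat.choose_mul_factorial_mul_factorial hk
      have hm := multi n k i j hk hi (by omega) hji
      calc n.choose i * n.choose i * i ! * (n - i)! * k ! * (n - k)!
            * (i.choose j * (n - i).choose (k - j))
          = (n.choose i * i ! * (n - i)!) * (k ! * (n - k)!)
              * (n.choose i * (i.choose j * (n - i).choose (k - j))) := by ring
        _ = (n.choose i * i ! * (n - i)!) * (k ! * (n - k)!)
              * (n.choose k * (k.choose j * (n - k).choose (i - j))) := by rw [hm]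
        _ = (n.choose i * i ! * (n - i)!) * (n.choose k * k ! * (n - k)!)
              * (k.choose j * (n - k).choose (i - j)) := by ring
        _ = _ := by rw [h5, h6]
    have natidR : (n.choose i : ℝ) * (n.choose i : ℝ) * (i ! : ℝ) * ((n - i)! : ℝ)
          * (k ! : ℝ) * ((n - k)! : ℝ) * ((i.choose j : ℝ) * ((n - i).choose (k - j) : ℝ))
        = (n ! : ℝ) * (n ! : ℝ) * ((k.choose j : ℝ) * ((n - k).choose (i - j) : ℝ)) := by
      exact_mod_cast natid
    rw [hK]
    unfold lamval
    have hcni : ((n.choose i : ℝ)) ≠ 0 := choose_ne hi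
    field_simp
    linear_combination ((-1 : ℝ) ^ k * (-1 : ℝ) ^ j * (k.choose j : ℝ)) * natidR
  · rw [if_neg hji]
    rw [Nat.choose_eq_zero_of_lt (show i < j from by omega)]
    simp
lemma elevsum (n k : ℕ) (hk : k ≤ n) (j : ℕ) (hj : j ≤ k) :
    ∑ i ∈ range (n + 1), wv n k i * betaI (i + j) ((n - i) + (k - j))
      = ∑ j' ∈ range (k + 1), ((-1 : ℝ) ^ (k + j') * (k.choose j' : ℝ) * (k.choose j' : ℝ))
          * betaI (j' + j) ((k - j') + (k - j)) := by
  have e1 : ∀ i ∈ range (n + 1), wv n k i * betaI (i + j) ((n - i) + (k - j))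
      = ∑ j' ∈ range (k + 1), ((-1 : ℝ) ^ (k + j') * (k.choose j' : ℝ) * (k.choose j' : ℝ))
          * ((if j' ≤ i then ((n - k).choose (i - j') : ℝ) else 0)
            * betaI (i + j) ((n - i) + (k - j))) := by
    intro i _
    unfold wv
    rw [Finset.sum_mul]
    refine Finset.sum_congr rfl fun j' _ => ?_
    split_ifs with h <;> ring
  rw [Finset.sum_congr rfl e1, Finset.sum_comm]
  refine Finset.sum_congr rfl fun j' hj' => ?_
  rw [Finset.mem_range] at hj'
  rw [← Finset.mul_sum]
  congr 1
  have hsplit : ∑ i ∈ range (n + 1),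
      (if j' ≤ i then ((n - k).choose (i - j') : ℝ) else 0)
        * betaI (i + j) ((n - i) + (k - j))
      = ∑ i ∈ Finset.Ico 0 j',
          (if j' ≤ i then ((n - k).choose (i - j') : ℝ) else 0)
            * betaI (i + j) ((n - i) + (k - j))
        + ∑ i ∈ Finset.Ico j' (n + 1),
          (if j' ≤ i then ((n - k).choose (i - j') : ℝ) else 0)
            * betaI (i + j) ((n - i) + (k - j)) := by
    rw [Finset.range_eq_Ico,
      ← Finset.sum_Ico_consecutive _ (Nat.zero_le j') (show j' ≤ n + 1 from by omega)]
  rw [hsplit]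
  have hz : ∑ i ∈ Finset.Ico 0 j',
      (if j' ≤ i then ((n - k).choose (i - j') : ℝ) else 0)
        * betaI (i + j) ((n - i) + (k - j)) = 0 := by
    refine Finset.sum_eq_zero fun i hi => ?_
    rw [Finset.mem_Ico] at hi
    rw [if_neg (by omega), zero_mul]
  rw [hz, zero_add, Finset.sum_Ico_eq_sum_range]
  rw [show n + 1 - j' = (n - j') + 1 from by omega]
  have e2 : ∀ m ∈ range ((n - j') + 1),
      (if j' ≤ j' + m then ((n - k).choose (j' + m - j') : ℝ) else 0)
        * betaI ((j' + m) + j) ((n - (j' + m)) + (k - j))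
      = ((n - k).choose m : ℝ) * betaI ((j' + m) + j) ((n - (j' + m)) + (k - j)) := by
    intro m _
    rw [if_pos (Nat.le_add_right j' m), Nat.add_sub_cancel_left]
  rw [Finset.sum_congr rfl e2]
  have hsub : range ((n - k) + 1) ⊆ range ((n - j') + 1) :=
    Finset.range_subset_range.2 (by omega)
  rw [← Finset.sum_subset hsub (fun m hm1 hm2 => by
    rw [Finset.mem_range] at hm1 hm2
    rw [Nat.choose_eq_zero_of_lt (show n - k < m from by omega), Nat.cast_zero, zero_mul])]
  have e3 : ∀ m ∈ range ((n - k) + 1),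
      ((n - k).choose m : ℝ) * betaI ((j' + m) + j) ((n - (j' + m)) + (k - j))
      = ((n - k).choose m : ℝ)
          * betaI ((j' + j) + m) (((k - j') + (k - j)) + ((n - k) - m)) := by
    intro m hm
    rw [Finset.mem_range] at hm
    rw [show (j' + m) + j = (j' + j) + m from by omega,
      show (n - (j' + m)) + (k - j) = ((k - j') + (k - j)) + ((n - k) - m) from by omega]
  rw [Finset.sum_congr rfl e3, elevbeta (j' + j) ((k - j') + (k - j)) (n - k)]

lemma wkk (k j : ℕ) (hj : j ≤ k) :
    wv k k j = (-1 : ℝ) ^ (k + j) * (k.choose j : ℝ) ^ 2 := by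
  unfold wv
  rw [Finset.sum_eq_single j]
  · rw [if_pos (le_refl j), Nat.sub_self, Nat.sub_self, Nat.choose_zero_right]
    push_cast
    ring
  · intro b hb hbne
    rw [Finset.mem_range] at hb
    by_cases hbj : b ≤ j
    · rw [if_pos hbj, Nat.sub_self,
        Nat.choose_eq_zero_of_lt (show 0 < j - b from by omega)]
      push_cast
      ring
    · rw [if_neg hbj, zero_mul]
  · intro hnk
    exact absurd (Finset.mem_range.2 (by omega)) hnk
/-- The degree elevation matrix `E^{k,n}` (out-of-range binomials are zero). -/
noncomputable def elev (k n : ℕ) : Matrix (Fin (n + 1)) (Fin (k + 1)) ℝ :=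
  fun i j =>
    if (j : ℕ) ≤ (i : ℕ) then
      (k.choose j : ℝ) * ((n - k).choose ((i : ℕ) - (j : ℕ)) : ℝ) / (n.choose i : ℝ)
    else 0

/-- Bernstein coefficient vector of the degree-`k` shifted Legendre polynomial. -/
noncomputable def legCoeff (k : ℕ) : Fin (k + 1) → ℝ :=
  fun i => (-1 : ℝ) ^ (k + (i : ℕ)) * (k.choose i : ℝ)

/-- for `0 ≤ k ≤ n`, `‖E^{k,n} Π(L^k)‖₂² = 1/((2k+1) λ^n_k)` with
`λ^n_k = (n!)²/((n+k+1)!(n-k)!)`. -/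
theorem elevated_legendre_norm (n k : ℕ) (hk : k ≤ n) :
    ∑ i, ((elev k n).mulVec (legCoeff k) i) ^ 2 =
      1 / ((2 * (k : ℝ) + 1) *
        ((Nat.factorial n : ℝ) ^ 2 /
          ((Nat.factorial (n + k + 1) : ℝ) * (Nat.factorial (n - k) : ℝ)))) := by
  have hlam : lamval n k ≠ 0 := by
    unfold lamval
    exact div_ne_zero (pow_ne_zero 2 (fact_ne n)) (mul_ne_zero (fact_ne _) (fact_ne _))
  have hmv : ∀ i : Fin (n + 1),
      (elev k n).mulVec (legCoeff k) i = wv n k (i : ℕ) / ((n.choose (i : ℕ) : ℝ)) := by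
    intro i
    show ∑ j : Fin (k + 1), elev k n i j * legCoeff k j = _
    unfold elev legCoeff
    rw [Fin.sum_univ_eq_sum_range (fun j =>
      (if j ≤ (i : ℕ) then
          (k.choose j : ℝ) * ((n - k).choose ((i : ℕ) - j) : ℝ) / (n.choose (i : ℕ) : ℝ)
        else 0) * ((-1 : ℝ) ^ (k + j) * (k.choose j : ℝ)))]
    unfold wv
    rw [Finset.sum_div]
    refine Finset.sum_congr rfl fun j _ => ?_
    split_ifs with h <;> ring
  simp only [hmv]
  rw [Fin.sum_univ_eq_sum_range (fun i => (wv n k i / (n.choose i : ℝ)) ^ 2)]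
  have h1 : ∀ i ∈ range (n + 1), (wv n k i / (n.choose i : ℝ)) ^ 2
      = (lamval n k)⁻¹ * ((wv n k i / (n.choose i : ℝ)) *
          (∑ j ∈ range (k + 1), ((-1 : ℝ) ^ (k + j) * (k.choose j : ℝ))
            * ((k.choose j : ℝ) * (n.choose i : ℝ) * betaI (i + j) ((n - i) + (k - j))))) := by
    intro i hi
    rw [Finset.mem_range] at hi
    have hcni : ((n.choose i : ℝ)) ≠ 0 := choose_ne (by omega)
    rw [eigen n k i hk (by omega), pow_two]
    field_simp
  rw [Finset.sum_congr rfl h1, ← Finset.mul_sum]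
  have h2 : ∀ i ∈ range (n + 1),
      (wv n k i / (n.choose i : ℝ)) *
        (∑ j ∈ range (k + 1), ((-1 : ℝ) ^ (k + j) * (k.choose j : ℝ))
          * ((k.choose j : ℝ) * (n.choose i : ℝ) * betaI (i + j) ((n - i) + (k - j))))
      = ∑ j ∈ range (k + 1), ((-1 : ℝ) ^ (k + j) * (k.choose j : ℝ) * (k.choose j : ℝ))
          * (wv n k i * betaI (i + j) ((n - i) + (k - j))) := by
    intro i hi
    rw [Finset.mem_range] at hi
    have hcni : ((n.choose i : ℝ)) ≠ 0 := choose_ne (by omega)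
    rw [Finset.mul_sum]
    refine Finset.sum_congr rfl fun j _ => ?_
    rw [div_mul_eq_mul_div, div_eq_iff hcni]
    ring
  rw [Finset.sum_congr rfl h2, Finset.sum_comm]
  have h3 : ∀ j ∈ range (k + 1),
      ∑ i ∈ range (n + 1), ((-1 : ℝ) ^ (k + j) * (k.choose j : ℝ) * (k.choose j : ℝ))
          * (wv n k i * betaI (i + j) ((n - i) + (k - j)))
      = ((-1 : ℝ) ^ (k + j) * (k.choose j : ℝ) * (k.choose j : ℝ))
          * ∑ j' ∈ range (k + 1),
            ((-1 : ℝ) ^ (k + j') * (k.choose j' : ℝ) * (k.choose j' : ℝ))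
              * betaI (j' + j) ((k - j') + (k - j)) := by
    intro j hj
    rw [Finset.mem_range] at hj
    rw [← Finset.mul_sum, elevsum n k hk j (by omega)]
  rw [Finset.sum_congr rfl h3]
  have h4 : ∀ j ∈ range (k + 1),
      ((-1 : ℝ) ^ (k + j) * (k.choose j : ℝ) * (k.choose j : ℝ))
        * ∑ j' ∈ range (k + 1),
            ((-1 : ℝ) ^ (k + j') * (k.choose j' : ℝ) * (k.choose j' : ℝ))
              * betaI (j' + j) ((k - j') + (k - j))
      = lamval k k * (k.choose j : ℝ) ^ 2 := by
    intro j hj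
    rw [Finset.mem_range] at hj
    have hckj : ((k.choose j : ℝ)) ≠ 0 := choose_ne (by omega)
    have he := eigen k k j (le_refl k) (by omega)
    rw [wkk k j (by omega)] at he
    have e5 : ∀ j' ∈ range (k + 1),
        ((-1 : ℝ) ^ (k + j') * (k.choose j' : ℝ))
          * ((k.choose j' : ℝ) * (k.choose j : ℝ) * betaI (j + j') ((k - j) + (k - j')))
        = (k.choose j : ℝ) * (((-1 : ℝ) ^ (k + j') * (k.choose j' : ℝ) * (k.choose j' : ℝ))
            * betaI (j' + j) ((k - j') + (k - j))) := by
      intro j' _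
      rw [Nat.add_comm j j', Nat.add_comm (k - j) (k - j')]
      ring
    rw [Finset.sum_congr rfl e5, ← Finset.mul_sum] at he
    have hsgn : ((-1 : ℝ) ^ (k + j)) * ((-1 : ℝ) ^ (k + j)) = 1 := by
      rw [← pow_add]
      exact Even.neg_one_pow ⟨k + j, by ring⟩
    field_simp at he
    have hS : ∑ j' ∈ range (k + 1), (-1 : ℝ) ^ (k + j') * (k.choose j' : ℝ) ^ 2
        * betaI (j' + j) ((k - j') + (k - j))
        = ∑ j' ∈ range (k + 1), (-1 : ℝ) ^ (k + j') * (k.choose j' : ℝ) * (k.choose j' : ℝ)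
        * betaI (j' + j) ((k - j') + (k - j)) := Finset.sum_congr rfl fun _ _ => by ring
    rw [hS] at he
    linear_combination ((-1 : ℝ) ^ (k + j) * (k.choose j : ℝ) ^ 2) * he
      + (lamval k k * (k.choose j : ℝ) ^ 2) * hsgn
  rw [Finset.sum_congr rfl h4, ← Finset.mul_sum]
  have hsq : ∑ j ∈ range (k + 1), ((k.choose j : ℝ)) ^ 2 = ((k + k).choose k : ℝ) := by
    have hv : ((k + k).choose k : ℝ)
        = ∑ c ∈ range (k + 1), (k.choose c : ℝ) * (k.choose c : ℝ) := by
      exact_mod_cast congrArg (fun t : ℕ => (t : ℝ)) (vand2 k k k (le_refl k))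
    rw [hv]
    exact Finset.sum_congr rfl fun c _ => pow_two _
  rw [hsq]
  have hfin : lamval k k * ((k + k).choose k : ℝ) = 1 / (2 * (k : ℝ) + 1) := by
    unfold lamval
    have hck : ((k + k).choose k : ℝ) * (k ! : ℝ) * (k ! : ℝ) = ((k + k)! : ℝ) := by
      exact_mod_cast Nat.add_choose_mul_factorial_mul_factorial k k
    have hfs : ((k + k + 1)! : ℝ) = ((k + k + 1 : ℕ) : ℝ) * ((k + k)! : ℝ) := by
      exact_mod_cast Nat.factorial_succ (k + k)
    rw [Nat.sub_self, Nat.factorial_zero, hfs]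
    have h2k : ((k + k + 1 : ℕ) : ℝ) = 2 * (k : ℝ) + 1 := by push_cast; ring
    rw [h2k]
    have hne : (2 * (k : ℝ) + 1) ≠ 0 := by positivity
    field_simp
    linear_combination hck
  rw [hfin]
  unfold lamval
  have hne : (2 * (k : ℝ) + 1) ≠ 0 := by positivity
  field_simp
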